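/- Let (V, 𝓑) be a symmetric 2-(n+1, k, λ) design on the point set V = {0,1,…,n} with 2 ≤ k ≤ n−1 and λ ≥ 1. Let Y_{k−1} = { y ∈ {0,1}^n : ȳ = B∖{0} for some block B ∈ 𝓑 with 0 ∈ B } and Y_k = { y ∈ {0,1}^n : ȳ = B for some block B ∈ 𝓑 with 0 ∉ B } (supports taken in the coordinate set {1,…,n}). Then Y = Y_{k−1} ∪ Y_k, with constant weight 1, is a tight relative 2-design in H(n,2) with respect to u₀ = (0,…,0), supported on the shells X_{k−1} and X_k. -/

import Mathlib

open Finset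

/-- The vertex set of the binary Hamming scheme `H(n,2)`. -/
abbrev X (n : ℕ) := Fin n → Bool

/-- The fixed base point `u₀ = (0,…,0)`. -/
def u₀ (n : ℕ) : X n := fun _ => false

/-- The `r`-th shell `X_r = {x : d(u₀,x) = r}`. -/
def shell (n r : ℕ) : Finset (X n) :=
  Finset.univ.filter (fun x => hammingDist (u₀ n) x = r)

/-- The Krawtchouk polynomial `Q_j(u)` for `H(n,2)`. -/
noncomputable def Q (n j u : ℕ) : ℝ :=
  ∑ i ∈ Finset.range (j + 1),
    (-1 : ℝ) ^ i * ((n - u).choose (j - i) : ℝ) * (u.choose i : ℝ)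

/-- The total weight `W_r = Σ_{y ∈ Y ∩ X_r} w(y)`. -/
noncomputable def Wt (n : ℕ) (Y : Finset (X n)) (w : X n → ℝ) (r : ℕ) : ℝ :=
  ∑ y ∈ Y.filter (fun y => hammingDist (u₀ n) y = r), w y

/-- `(Y,w)` is a relative `t`-design of `H(n,2)` with respect to `u₀ = (0,…,0)`,
supported on the shells `X_r`, `r ∈ R`: `Y` lies in the union of these shells,
meets each of them, has positive weights, and the design identity holds for all
Krawtchouk functions of degree `j ≤ t`. -/
def IsRelativeDesign (n t : ℕ) (Y : Finset (X n)) (w : X n → ℝ) (R : Finset ℕ) : Prop :=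
  (∀ y ∈ Y, hammingDist (u₀ n) y ∈ R) ∧
  (∀ r ∈ R, ∃ y ∈ Y, hammingDist (u₀ n) y = r) ∧
  (∀ y ∈ Y, 0 < w y) ∧
  (∀ j ≤ t, ∀ u : X n,
    ∑ r ∈ R, Wt n Y w r / (n.choose r : ℝ) * ∑ x ∈ shell n r, Q n j (hammingDist u x)
      = ∑ y ∈ Y, w y * Q n j (hammingDist u y))

/-- The binary vector in `{0,1}^n` whose support (in coordinates `{1,…,n}`,
i.e. the nonzero points of `{0,1,…,n}`) is the set `B ⊆ {0,1,…,n}`. -/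
def blockVec (n : ℕ) (B : Finset (Fin (n + 1))) : X n :=
  fun i => decide (i.succ ∈ B)

def supp {n : ℕ} (x : X n) : Finset (Fin n) := Finset.univ.filter (fun i => x i = true)

lemma mem_supp {n : ℕ} {x : X n} {i : Fin n} : i ∈ supp x ↔ x i = true := by
  simp [supp]

lemma hammingDist_u0 {n : ℕ} (x : X n) : hammingDist (u₀ n) x = (supp x).card := by
  unfold hammingDist
  congr 1
  ext i
  simp only [supp, mem_filter, mem_univ, true_and, u₀]
  cases h : x i <;> simp [h]

lemma hd_add {n : ℕ} (u x : X n) :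
    hammingDist u x + 2 * (supp u ∩ supp x).card = (supp u).card + (supp x).card := by
  have h1 : (Finset.univ.filter fun i => u i ≠ x i) = (supp u ∪ supp x) \ (supp u ∩ supp x) := by
    ext i
    simp only [mem_filter, mem_univ, true_and, mem_sdiff, mem_union, mem_inter, mem_supp]
    cases hu : u i <;> cases hx : x i <;> simp
  have h2 : hammingDist u x = ((supp u ∪ supp x) \ (supp u ∩ supp x)).card := by
    rw [hammingDist]; rw [h1]
  rw [h2, card_sdiff_of_subset (by exact inter_subset_union)]
  have h3 := Finset.card_union_add_card_inter (supp u) (supp x)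
  have h4 : (supp u ∩ supp x).card ≤ (supp u ∪ supp x).card :=
    card_le_card inter_subset_union
  omega

lemma sum_shell {n : ℕ} {M : Type*} [AddCommMonoid M] (f : X n → M) (r : ℕ) :
    ∑ x ∈ shell n r, f x = ∑ A ∈ Finset.powersetCard r (univ : Finset (Fin n)),
      f (fun i => decide (i ∈ A)) := by
  refine Finset.sum_nbij' (fun x => supp x) (fun A => fun i => decide (i ∈ A)) ?_ ?_ ?_ ?_ ?_
  · intro x hx
    simp only [shell, mem_filter, mem_univ, true_and] at hx
    rw [mem_powersetCard]
    exact ⟨subset_univ _, by rw [← hammingDist_u0, hx]⟩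
  · intro A hA
    rw [mem_powersetCard] at hA
    simp only [shell, mem_filter, mem_univ, true_and]
    rw [hammingDist_u0]
    rw [← hA.2]
    congr 1
    ext i; simp [supp]
  · intro x hx
    funext i
    rcases hxi : x i <;> simp [mem_supp, hxi]
  · intro A hA
    ext i; simp [supp]
  · intro x hx
    congr 1
    funext i
    rcases hxi : x i <;> simp [mem_supp, hxi]

lemma supp_ofSet {n : ℕ} (A : Finset (Fin n)) : supp (fun i => decide (i ∈ A)) = A := by
  ext i; simp [supp]


lemma filter_mem_powersetCard {α : Type*} [DecidableEq α] (s : Finset α) (a : α) (ha : a ∈ s) (r : ℕ) :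
    ((s.powersetCard (r+1)).filter (fun A => a ∈ A)).card = ((s.erase a).powersetCard r).card := by
  refine Finset.card_bij' (fun A _ => A.erase a) (fun C _ => insert a C) ?_ ?_ ?_ ?_
  · intro A hA
    simp only [mem_filter, mem_powersetCard] at hA
    rw [mem_powersetCard]
    exact ⟨erase_subset_erase _ hA.1.1, by rw [card_erase_of_mem hA.2, hA.1.2]; rfl⟩
  · intro C hC
    rw [mem_powersetCard] at hC
    have haC : a ∉ C := fun h => (mem_erase.mp (hC.1 h)).1 rfl
    simp only [mem_filter, mem_powersetCard]
    refine ⟨⟨insert_subset ha (hC.1.trans (erase_subset _ _)), ?_⟩, mem_insert_self _ _⟩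
    rw [card_insert_of_notMem haC, hC.2]
  · intro A hA
    simp only [mem_filter] at hA
    exact insert_erase hA.2
  · intro C hC
    rw [mem_powersetCard] at hC
    exact erase_insert (fun h => (mem_erase.mp (hC.1 h)).1 rfl)

lemma filter_pair_powersetCard {α : Type*} [DecidableEq α] (s : Finset α) (a b : α)
    (ha : a ∈ s) (hb : b ∈ s) (hab : a ≠ b) (r : ℕ) :
    ((s.powersetCard (r+2)).filter (fun A => a ∈ A ∧ b ∈ A)).card
      = (((s.erase a).erase b).powersetCard r).card := by
  have step : ((s.powersetCard (r+2)).filter (fun A => a ∈ A ∧ b ∈ A)).card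
      = (((s.erase a).powersetCard (r+1)).filter (fun A => b ∈ A)).card := by
    refine Finset.card_bij' (fun A _ => A.erase a) (fun C _ => insert a C) ?_ ?_ ?_ ?_
    · intro A hA
      simp only [mem_filter, mem_powersetCard] at hA
      simp only [mem_filter, mem_powersetCard]
      exact ⟨⟨erase_subset_erase _ hA.1.1, by rw [card_erase_of_mem hA.2.1, hA.1.2]; rfl⟩,
        mem_erase.mpr ⟨hab.symm, hA.2.2⟩⟩
    · intro C hC
      simp only [mem_filter, mem_powersetCard] at hC
      have haC : a ∉ C := fun h => (mem_erase.mp (hC.1.1 h)).1 rfl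
      simp only [mem_filter, mem_powersetCard]
      refine ⟨⟨insert_subset ha (hC.1.1.trans (erase_subset _ _)), ?_⟩,
        mem_insert_self _ _, mem_insert_of_mem hC.2⟩
      rw [card_insert_of_notMem haC, hC.1.2]
    · intro A hA
      simp only [mem_filter] at hA
      exact insert_erase hA.2.1
    · intro C hC
      simp only [mem_filter, mem_powersetCard] at hC
      exact erase_insert (fun h => (mem_erase.mp (hC.1.1 h)).1 rfl)
  rw [step, filter_mem_powersetCard _ b (mem_erase.mpr ⟨hab.symm, hb⟩) r]

lemma sum_inter_card {β : Type*} [DecidableEq β] (T : Finset (Finset β)) (U : Finset β) :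
    ∑ b ∈ T, (U ∩ b).card = ∑ p ∈ U, (T.filter (fun b => p ∈ b)).card := by
  have h : ∀ b : Finset β, (U ∩ b).card = ∑ p ∈ U, if p ∈ b then 1 else 0 := fun b =>
    Finset.card_filter _ _
  simp_rw [h, Finset.card_filter]
  exact Finset.sum_comm

lemma sum_inter_card_sq {β : Type*} [DecidableEq β] (T : Finset (Finset β)) (U : Finset β) :
    ∑ b ∈ T, (U ∩ b).card ^ 2
      = ∑ p ∈ U, ∑ q ∈ U, (T.filter (fun b => p ∈ b ∧ q ∈ b)).card := by
  have h : ∀ b : Finset β, (U ∩ b).card ^ 2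
      = ∑ p ∈ U, ∑ q ∈ U, if p ∈ b ∧ q ∈ b then 1 else 0 := by
    intro b
    rw [pow_two, show (U ∩ b) = U.filter (fun p => p ∈ b) from rfl, Finset.card_filter,
      Finset.sum_mul_sum]
    refine Finset.sum_congr rfl fun p _ => Finset.sum_congr rfl fun q _ => ?_
    by_cases h1 : p ∈ b <;> by_cases h2 : q ∈ b <;> simp [h1, h2]
  simp_rw [h, Finset.card_filter]
  rw [Finset.sum_comm]
  exact Finset.sum_congr rfl fun p _ => Finset.sum_comm

lemma choose_mul_id (n r : ℕ) : (r+1) * (n+1).choose (r+1) = (n+1) * n.choose r := by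
  have h := Nat.add_one_mul_choose_eq n r
  rw [h]; exact mul_comm _ _

lemma shell_card (n r : ℕ) : (shell n r).card = n.choose r := by
  calc (shell n r).card = ∑ _x ∈ shell n r, 1 := Finset.card_eq_sum_ones _
    _ = ∑ _A ∈ powersetCard r (univ : Finset (Fin n)), 1 := sum_shell _ r
    _ = n.choose r := by simp

lemma shell_sum_c (n r : ℕ) (u : X n) (hr : 1 ≤ r) (hn : 1 ≤ n) :
    n * ∑ x ∈ shell n r, (supp u ∩ supp x).card = (supp u).card * (r * n.choose r) := by
  obtain ⟨r', rfl⟩ : ∃ r', r = r' + 1 := ⟨r - 1, by omega⟩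
  obtain ⟨n', rfl⟩ : ∃ n', n = n' + 1 := ⟨n - 1, by omega⟩
  have h1 : ∑ x ∈ shell (n'+1) (r'+1), (supp u ∩ supp x).card
      = ∑ A ∈ powersetCard (r'+1) (univ : Finset (Fin (n'+1))), (supp u ∩ A).card := by
    rw [sum_shell (fun x => (supp u ∩ supp x).card)]
    exact Finset.sum_congr rfl fun A _ => by rw [supp_ofSet]
  rw [h1, sum_inter_card]
  have h2 : ∀ p ∈ supp u,
      ((powersetCard (r'+1) (univ : Finset (Fin (n'+1)))).filter (fun A => p ∈ A)).card
        = n'.choose r' := by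
    intro p _
    rw [filter_mem_powersetCard _ p (mem_univ p), card_powersetCard,
      card_erase_of_mem (mem_univ p)]
    simp
  rw [Finset.sum_congr rfl h2, Finset.sum_const, smul_eq_mul, choose_mul_id]
  ring

lemma shell_sum_c2 (n r : ℕ) (u : X n) (hr : 1 ≤ r) (hn : 2 ≤ n) :
    (n * (n-1)) * ∑ x ∈ shell n r, (supp u ∩ supp x).card ^ 2
      = ((supp u).card * ((n-1) * r) + ((supp u).card * ((supp u).card - 1)) * (r * (r-1)))
          * n.choose r := by
  rcases eq_or_lt_of_le hr with h1 | h2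
  · -- r = 1
    have hr1 : r = 1 := h1.symm
    subst hr1
    have hc : ∀ x ∈ shell n 1, (supp u ∩ supp x).card ^ 2 = (supp u ∩ supp x).card := by
      intro x hx
      have hxc : (supp x).card = 1 := by
        simp only [shell, mem_filter, mem_univ, true_and] at hx
        rw [← hammingDist_u0]; exact hx
      have hle : (supp u ∩ supp x).card ≤ 1 := by
        calc (supp u ∩ supp x).card ≤ (supp x).card := card_le_card inter_subset_right
          _ = 1 := hxc
      interval_cases h : (supp u ∩ supp x).card <;> norm_num
    rw [Finset.sum_congr rfl hc]
    have h := shell_sum_c n 1 u le_rfl (by omega)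
    have e : (n * (n-1)) * ∑ x ∈ shell n 1, (supp u ∩ supp x).card
        = (n-1) * (n * ∑ x ∈ shell n 1, (supp u ∩ supp x).card) := by ring
    rw [e, h]
    ring_nf
  · -- r ≥ 2
    obtain ⟨r'', rfl⟩ : ∃ r'', r = r'' + 2 := ⟨r - 2, by omega⟩
    obtain ⟨n'', rfl⟩ : ∃ n'', n = n'' + 2 := ⟨n - 2, by omega⟩
    have h1 : ∑ x ∈ shell (n''+2) (r''+2), (supp u ∩ supp x).card ^ 2
        = ∑ A ∈ powersetCard (r''+2) (univ : Finset (Fin (n''+2))), (supp u ∩ A).card ^ 2 := by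
      rw [sum_shell (fun x => (supp u ∩ supp x).card ^ 2)]
      exact Finset.sum_congr rfl fun A _ => by rw [supp_ofSet]
    rw [h1, sum_inter_card_sq]
    have h2 : ∀ p ∈ supp u,
        (∑ q ∈ supp u, ((powersetCard (r''+2) (univ : Finset (Fin (n''+2)))).filter
            (fun A => p ∈ A ∧ q ∈ A)).card)
          = (n''+1).choose (r''+1) + ((supp u).card - 1) * n''.choose r'' := by
      intro p hp
      rw [← Finset.sum_erase_add _ _ hp]
      have hdiag : ((powersetCard (r''+2) (univ : Finset (Fin (n''+2)))).filter
          (fun A => p ∈ A ∧ p ∈ A)).card = (n''+1).choose (r''+1) := by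
        have : ((powersetCard (r''+2) (univ : Finset (Fin (n''+2)))).filter
            (fun A => p ∈ A ∧ p ∈ A)) = ((powersetCard (r''+2) (univ : Finset (Fin (n''+2)))).filter
            (fun A => p ∈ A)) := by
          apply filter_congr; intro A _; simp
        rw [this, filter_mem_powersetCard _ p (mem_univ p), card_powersetCard,
          card_erase_of_mem (mem_univ p)]
        simp
      have hoff : ∀ q ∈ (supp u).erase p,
          ((powersetCard (r''+2) (univ : Finset (Fin (n''+2)))).filter
            (fun A => p ∈ A ∧ q ∈ A)).card = n''.choose r'' := by
        intro q hq
        have hqp : p ≠ q := fun h => (mem_erase.mp hq).1 h.symm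
        rw [filter_pair_powersetCard _ p q (mem_univ p) (mem_univ q) hqp, card_powersetCard,
          card_erase_of_mem (mem_erase.mpr ⟨hqp.symm, mem_univ q⟩),
          card_erase_of_mem (mem_univ p)]
        simp
      rw [Finset.sum_congr rfl hoff, Finset.sum_const, smul_eq_mul,
        card_erase_of_mem hp, hdiag]
      ring
    rw [Finset.sum_congr rfl h2, Finset.sum_const, smul_eq_mul]
    have e1 : (r''+2) * (n''+2).choose (r''+2) = (n''+2) * ((n''+1).choose (r''+1)) :=
      choose_mul_id _ _
    have e2 : (r''+1) * (n''+1).choose (r''+1) = (n''+1) * (n''.choose r'') :=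
      choose_mul_id _ _
    have hs1 : n'' + 2 - 1 = n'' + 1 := rfl
    have hs2 : r'' + 2 - 1 = r'' + 1 := rfl
    rw [hs1, hs2]
    zify at e1 e2 ⊢
    set m := (supp u).card with hm
    set z := ((m - 1 : ℕ) : ℤ) with hz
    linear_combination (-(m:ℤ)*(n''+1) - (m:ℤ)*z*(r''+1)) * e1 - (m:ℤ)*z*(n''+2) * e2

section Design

variable {n k lam : ℕ} {B : Finset (Finset (Fin (n+1)))}

lemma deg_mul (hblk : ∀ b ∈ B, b.card = k)
    (hpair : ∀ p q : Fin (n+1), p ≠ q → (B.filter (fun b => p ∈ b ∧ q ∈ b)).card = lam)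
    (p : Fin (n+1)) :
    (B.filter (fun b => p ∈ b)).card * (k-1) = n * lam := by
  have key : ∑ q ∈ (univ : Finset (Fin (n+1))).erase p,
      (B.filter (fun b => p ∈ b ∧ q ∈ b)).card
      = ∑ b ∈ B, if p ∈ b then (b.erase p).card else 0 := by
    simp_rw [Finset.card_filter]
    rw [Finset.sum_comm]
    refine Finset.sum_congr rfl fun b _ => ?_
    by_cases hp : p ∈ b
    · simp only [hp, true_and, if_true]
      rw [← Finset.card_filter]
      congr 1
      ext q
      simp only [mem_filter, mem_erase, mem_univ, true_and, and_comm]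
    · simp [hp]
  have lhs : ∑ q ∈ (univ : Finset (Fin (n+1))).erase p,
      (B.filter (fun b => p ∈ b ∧ q ∈ b)).card = n * lam := by
    rw [Finset.sum_congr rfl (fun q hq => hpair p q (fun h => (mem_erase.mp hq).1 h.symm)),
      Finset.sum_const, smul_eq_mul, card_erase_of_mem (mem_univ p)]
    simp
  have rhs : ∑ b ∈ B, (if p ∈ b then (b.erase p).card else 0)
      = (B.filter (fun b => p ∈ b)).card * (k-1) := by
    rw [Finset.sum_ite, Finset.sum_const_zero, add_zero]
    rw [Finset.sum_congr rfl (fun b hb => ?_), Finset.sum_const, smul_eq_mul]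
    rw [card_erase_of_mem (mem_filter.mp hb).2, hblk b (mem_filter.mp hb).1]
  rw [← rhs, ← key, lhs]

lemma deg_eq (hBcard : B.card = n+1) (hblk : ∀ b ∈ B, b.card = k)
    (hpair : ∀ p q : Fin (n+1), p ≠ q → (B.filter (fun b => p ∈ b ∧ q ∈ b)).card = lam)
    (hk : 2 ≤ k) (p : Fin (n+1)) :
    (B.filter (fun b => p ∈ b)).card = k := by
  have hconst : ∀ q : Fin (n+1),
      (B.filter (fun b => q ∈ b)).card = (B.filter (fun b => p ∈ b)).card := by
    intro q
    have h1 := deg_mul hblk hpair q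
    have h2 := deg_mul hblk hpair p
    have hk1 : 0 < k - 1 := by omega
    exact Nat.eq_of_mul_eq_mul_right hk1 (h1.trans h2.symm)
  have hsum : ∑ q : Fin (n+1), (B.filter (fun b => q ∈ b)).card = (n+1) * k := by
    simp_rw [Finset.card_filter]
    rw [Finset.sum_comm]
    have : ∀ b ∈ B, (∑ q : Fin (n+1), if q ∈ b then 1 else 0) = k := by
      intro b hb
      rw [← Finset.card_filter]
      rw [← hblk b hb]
      congr 1
      ext q; simp
    rw [Finset.sum_congr rfl this, Finset.sum_const, smul_eq_mul, hBcard]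
  rw [Finset.sum_congr rfl (fun q _ => hconst q), Finset.sum_const, smul_eq_mul,
    card_univ, Fintype.card_fin] at hsum
  exact Nat.eq_of_mul_eq_mul_left (by omega) hsum

lemma block_sum_c (hdeg : ∀ p : Fin (n+1), (B.filter (fun b => p ∈ b)).card = k)
    (U : Finset (Fin (n+1))) :
    ∑ b ∈ B, (U ∩ b).card = U.card * k := by
  rw [sum_inter_card, Finset.sum_congr rfl (fun p _ => hdeg p), Finset.sum_const, smul_eq_mul]

lemma block_sum_c2 (hdeg : ∀ p : Fin (n+1), (B.filter (fun b => p ∈ b)).card = k)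
    (hpair : ∀ p q : Fin (n+1), p ≠ q → (B.filter (fun b => p ∈ b ∧ q ∈ b)).card = lam)
    (U : Finset (Fin (n+1))) :
    ∑ b ∈ B, (U ∩ b).card ^ 2 = U.card * k + U.card * (U.card - 1) * lam := by
  rw [sum_inter_card_sq]
  have h : ∀ p ∈ U, (∑ q ∈ U, (B.filter (fun b => p ∈ b ∧ q ∈ b)).card)
      = k + (U.card - 1) * lam := by
    intro p hp
    rw [← Finset.sum_erase_add _ _ hp]
    have hdiag : (B.filter (fun b => p ∈ b ∧ p ∈ b)).card = k := by
      rw [← hdeg p]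
      congr 1
      apply filter_congr; intro b _; simp
    rw [Finset.sum_congr rfl (fun q hq => hpair p q (fun h => (mem_erase.mp hq).1 h.symm)),
      Finset.sum_const, smul_eq_mul, card_erase_of_mem hp, hdiag]
    ring
  rw [Finset.sum_congr rfl h, Finset.sum_const, smul_eq_mul]
  ring

lemma block_sum_c0 (hpair : ∀ p q : Fin (n+1), p ≠ q →
      (B.filter (fun b => p ∈ b ∧ q ∈ b)).card = lam)
    (U : Finset (Fin (n+1))) (h0 : (0 : Fin (n+1)) ∉ U) :
    ∑ b ∈ B.filter (fun b => (0 : Fin (n+1)) ∈ b), (U ∩ b).card = U.card * lam := by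
  rw [sum_inter_card]
  have h : ∀ p ∈ U, ((B.filter (fun b => (0 : Fin (n+1)) ∈ b)).filter
      (fun b => p ∈ b)).card = lam := by
    intro p hp
    rw [Finset.filter_filter]
    exact hpair 0 p (fun h => h0 (h ▸ hp))
  rw [Finset.sum_congr rfl h, Finset.sum_const, smul_eq_mul]

end Design

lemma mem_supp_blockVec {n : ℕ} {A : Finset (Fin (n+1))} {i : Fin n} :
    i ∈ supp (blockVec n A) ↔ i.succ ∈ A := by
  simp [supp, blockVec]

lemma card_supp_blockVec {n : ℕ} (A : Finset (Fin (n+1))) :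
    (supp (blockVec n A)).card = (A.erase 0).card := by
  refine Finset.card_bij' (fun i _ => i.succ)
    (fun a ha => a.pred (mem_erase.mp ha).1) ?_ ?_ ?_ ?_
  · intro i hi
    exact mem_erase.mpr ⟨Fin.succ_ne_zero i, mem_supp_blockVec.mp hi⟩
  · intro a ha
    rw [mem_supp_blockVec, Fin.succ_pred]
    exact (mem_erase.mp ha).2
  · intro i _
    exact Fin.pred_succ i
  · intro a _
    exact Fin.succ_pred a _

lemma inter_supp_blockVec {n : ℕ} (u : X n) (A : Finset (Fin (n+1))) :
    (supp u ∩ supp (blockVec n A)).card = (((supp u).image Fin.succ) ∩ A).card := by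
  have him : (supp u ∩ supp (blockVec n A)).image Fin.succ
      = ((supp u).image Fin.succ) ∩ A := by
    ext a
    simp only [mem_image, mem_inter, mem_supp_blockVec]
    constructor
    · rintro ⟨i, ⟨hi1, hi2⟩, rfl⟩
      exact ⟨⟨i, hi1, rfl⟩, hi2⟩
    · rintro ⟨⟨i, hi1, rfl⟩, ha⟩
      exact ⟨i, ⟨hi1, ha⟩, rfl⟩
  rw [← him, Finset.card_image_of_injective _ (Fin.succ_injective n)]

lemma zero_not_mem_image_succ {n : ℕ} (s : Finset (Fin n)) :
    (0 : Fin (n+1)) ∉ s.image Fin.succ := by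
  simp only [mem_image, not_exists]
  intro i
  rintro ⟨_, h⟩
  exact Fin.succ_ne_zero i h

lemma inter_erase_zero {n : ℕ} (U b : Finset (Fin (n+1))) (h0 : (0 : Fin (n+1)) ∉ U) :
    U ∩ b.erase 0 = U ∩ b := by
  ext a
  simp only [mem_inter, mem_erase]
  exact ⟨fun ⟨h1, _, h3⟩ => ⟨h1, h3⟩, fun ⟨h1, h3⟩ => ⟨h1, fun h => h0 (h ▸ h1), h3⟩⟩

lemma Q_zero_eval (n d : ℕ) : Q n 0 d = 1 := by
  simp [Q]

lemma Q_one_eval (n d : ℕ) (h : d ≤ n) : Q n 1 d = (n : ℝ) - 2 * d := by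
  unfold Q
  rw [Finset.sum_range_succ, Finset.sum_range_succ, Finset.sum_range_zero]
  norm_num [Nat.choose_one_right, Nat.cast_sub h]
  ring

lemma Q_two_eval (n d : ℕ) (h : d ≤ n) : Q n 2 d = (((n : ℝ) - 2 * d) ^ 2 - n) / 2 := by
  unfold Q
  rw [Finset.sum_range_succ, Finset.sum_range_succ, Finset.sum_range_succ,
    Finset.sum_range_zero]
  norm_num [Nat.choose_one_right, Nat.cast_choose_two, Nat.cast_sub h]
  ring

lemma cast_mul_pred (m : ℕ) : (m : ℝ) * ((m - 1 : ℕ) : ℝ) = (m : ℝ) * ((m : ℝ) - 1) := by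
  rcases m with _ | m
  · simp
  · rw [Nat.cast_sub (by omega)]
    push_cast
    ring

lemma sum_affine {ι : Type*} (T : Finset ι) (c : ι → ℕ) (a b : ℝ) :
    ∑ i ∈ T, (a + b * (c i : ℝ)) = T.card * a + b * ((∑ i ∈ T, c i : ℕ) : ℝ) := by
  rw [Finset.sum_add_distrib, Finset.sum_const, ← Finset.mul_sum, Nat.cast_sum]
  simp [mul_comm]

lemma sum_affine_sq {ι : Type*} (T : Finset ι) (c : ι → ℕ) (a b : ℝ) :
    ∑ i ∈ T, (a + b * (c i : ℝ)) ^ 2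
      = T.card * a ^ 2 + 2 * a * b * ((∑ i ∈ T, c i : ℕ) : ℝ)
        + b ^ 2 * ((∑ i ∈ T, (c i) ^ 2 : ℕ) : ℝ) := by
  have h : ∀ i, (a + b * (c i : ℝ)) ^ 2
      = a ^ 2 + (2 * a * b) * (c i : ℝ) + b ^ 2 * ((c i : ℝ)) ^ 2 := by
    intro i; ring
  rw [Finset.sum_congr rfl (fun i _ => h i)]
  rw [Finset.sum_add_distrib, Finset.sum_add_distrib, Finset.sum_const, ← Finset.mul_sum,
    ← Finset.mul_sum, Nat.cast_sum, Nat.cast_sum]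
  push_cast
  simp [mul_comm]

-- MORE

set_option maxHeartbeats 2000000 in
/-- Proposition 4.5 (1): from a symmetric 2-(n+1,k,λ) design on points
`{0,1,…,n}`, the blocks through `0` (with `0` removed) together with the blocks
avoiding `0` form a tight relative 2-design of `H(n,2)` with constant weight 1,
supported on the shells `X_{k−1}` and `X_k`. -/
theorem symmetric_design_tight_relative2design (n k lam : ℕ)
    (hk : 2 ≤ k) (hk' : k ≤ n - 1) (hlam : 1 ≤ lam)
    (B : Finset (Finset (Fin (n + 1))))
    (hBcard : B.card = n + 1)
    (hblk : ∀ b ∈ B, b.card = k)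
    (hpair : ∀ p q : Fin (n + 1), p ≠ q →
      (B.filter (fun b => p ∈ b ∧ q ∈ b)).card = lam)
    (Y : Finset (X n))
    (hY : Y = (B.filter (fun b => 0 ∈ b)).image (fun b => blockVec n (b.erase 0))
        ∪ (B.filter (fun b => 0 ∉ b)).image (blockVec n)) :
    IsRelativeDesign n 2 Y (fun _ => 1) {k - 1, k} ∧ Y.card = n + 1 := by
  have hn3 : 3 ≤ n := by omega
  have hkn : k ≤ n := by omega
  set F : Finset (Fin (n+1)) → X n := fun b => blockVec n (b.erase 0) with hF
  have hYim : Y = B.image F := by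
    rw [hY]
    have hsplit : B.image F = (B.filter (fun b => (0 : Fin (n+1)) ∈ b)).image F
        ∪ (B.filter (fun b => ¬ (0 : Fin (n+1)) ∈ b)).image F := by
      rw [← Finset.image_union, Finset.filter_union_filter_not_eq]
    rw [hsplit]
    congr 1
    apply Finset.image_congr
    intro b hb
    simp only [Finset.coe_filter, Set.mem_setOf_eq] at hb
    rw [hF]
    simp only
    rw [Finset.erase_eq_of_notMem hb.2]
  have hinj : ∀ b₁ ∈ B, ∀ b₂ ∈ B, F b₁ = F b₂ → b₁ = b₂ := by
    intro b₁ h₁ b₂ h₂ heq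
    have herase : b₁.erase 0 = b₂.erase 0 := by
      ext a
      rcases eq_or_ne a 0 with rfl | ha
      · simp
      · have hsa : (a.pred ha).succ = a := Fin.succ_pred a ha
        rw [← hsa, ← mem_supp_blockVec, ← mem_supp_blockVec]
        rw [show blockVec n (b₁.erase 0) = F b₁ from rfl,
          show blockVec n (b₂.erase 0) = F b₂ from rfl, heq]
    have e1 := hblk b₁ h₁
    have e2 := hblk b₂ h₂
    by_cases h01 : (0 : Fin (n+1)) ∈ b₁ <;> by_cases h02 : (0 : Fin (n+1)) ∈ b₂
    · rw [← Finset.insert_erase h01, ← Finset.insert_erase h02, herase]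
    · exfalso
      rw [Finset.erase_eq_of_notMem h02] at herase
      have hc := Finset.card_erase_of_mem h01
      rw [herase, e2, e1] at hc
      omega
    · exfalso
      rw [Finset.erase_eq_of_notMem h01] at herase
      have hc := Finset.card_erase_of_mem h02
      rw [← herase, e1, e2] at hc
      omega
    · rw [← Finset.erase_eq_of_notMem h01, herase, Finset.erase_eq_of_notMem h02]
  have hinjOn : Set.InjOn F ↑B := by
    intro a ha b hb h
    exact hinj a (by simpa using ha) b (by simpa using hb) h
  have hYcard : Y.card = n + 1 := by
    rw [hYim, Finset.card_image_of_injOn hinjOn, hBcard]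
  have hdeg : ∀ p : Fin (n+1), (B.filter (fun b => p ∈ b)).card = k :=
    deg_eq hBcard hblk hpair hk
  have hlamn : k * (k - 1) = n * lam := by
    have h := deg_mul hblk hpair (0 : Fin (n+1))
    rw [hdeg 0] at h
    exact h
  have hdistF : ∀ b ∈ B,
      hammingDist (u₀ n) (F b) = (if (0 : Fin (n+1)) ∈ b then k - 1 else k) := by
    intro b hb
    rw [hammingDist_u0, hF]
    simp only
    rw [card_supp_blockVec, Finset.erase_idem]
    by_cases h0 : (0 : Fin (n+1)) ∈ b
    · rw [if_pos h0, Finset.card_erase_of_mem h0, hblk b hb]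
    · rw [if_neg h0, Finset.erase_eq_of_notMem h0, hblk b hb]
  have hsne : k - 1 ≠ k := by omega
  have hfilt1 : Y.filter (fun y => hammingDist (u₀ n) y = k - 1)
      = (B.filter (fun b => (0 : Fin (n+1)) ∈ b)).image F := by
    rw [hYim, Finset.filter_image]
    congr 1
    apply Finset.filter_congr
    intro b hb
    rw [hdistF b hb]
    by_cases h0 : (0 : Fin (n+1)) ∈ b <;> simp [h0, hsne] <;> omega
  have hfilt2 : Y.filter (fun y => hammingDist (u₀ n) y = k)
      = (B.filter (fun b => ¬ (0 : Fin (n+1)) ∈ b)).image F := by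
    rw [hYim, Finset.filter_image]
    congr 1
    apply Finset.filter_congr
    intro b hb
    rw [hdistF b hb]
    by_cases h0 : (0 : Fin (n+1)) ∈ b <;> simp [h0, hsne] <;> omega
  have hcard_not : (B.filter (fun b => ¬ (0 : Fin (n+1)) ∈ b)).card = n + 1 - k := by
    have h := Finset.card_filter_add_card_filter_not
      (s := B) (p := fun b => (0 : Fin (n+1)) ∈ b)
    rw [hdeg 0, hBcard] at h
    omega
  have hfilt1card : (Y.filter (fun y => hammingDist (u₀ n) y = k - 1)).card = k := by
    rw [hfilt1, Finset.card_image_of_injOn (hinjOn.mono (by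
      intro b hb
      simp only [Finset.coe_filter, Set.mem_setOf_eq] at hb
      exact hb.1)), hdeg 0]
  have hfilt2card : (Y.filter (fun y => hammingDist (u₀ n) y = k)).card = n + 1 - k := by
    rw [hfilt2, Finset.card_image_of_injOn (hinjOn.mono (by
      intro b hb
      simp only [Finset.coe_filter, Set.mem_setOf_eq] at hb
      exact hb.1)), hcard_not]
  refine ⟨⟨?_, ?_, ?_, ?_⟩, hYcard⟩
  · -- condition 1
    intro y hy
    rw [hYim] at hy
    obtain ⟨b, hb, rfl⟩ := Finset.mem_image.mp hy
    rw [hdistF b hb]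
    by_cases h0 : (0 : Fin (n+1)) ∈ b <;> simp [h0]
  · -- condition 2
    intro r hr
    rcases Finset.mem_insert.mp hr with rfl | hr'
    · have hpos : 0 < (B.filter (fun b => (0 : Fin (n+1)) ∈ b)).card := by
        rw [hdeg 0]; omega
      obtain ⟨b, hb⟩ := Finset.card_pos.mp hpos
      refine ⟨F b, ?_, ?_⟩
      · rw [hYim]
        exact Finset.mem_image_of_mem F (Finset.mem_of_mem_filter b hb)
      · rw [hdistF b (Finset.mem_of_mem_filter b hb), if_pos (Finset.mem_filter.mp hb).2]
    · rw [Finset.mem_singleton] at hr'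
      subst hr'
      have hpos : 0 < (B.filter (fun b => ¬ (0 : Fin (n+1)) ∈ b)).card := by
        rw [hcard_not]; omega
      obtain ⟨b, hb⟩ := Finset.card_pos.mp hpos
      refine ⟨F b, ?_, ?_⟩
      · rw [hYim]
        exact Finset.mem_image_of_mem F (Finset.mem_of_mem_filter b hb)
      · rw [hdistF b (Finset.mem_of_mem_filter b hb), if_neg (Finset.mem_filter.mp hb).2]
  · intro y _; norm_num
  · -- condition 4
    intro j hj u
    have hnR : (n : ℝ) ≠ 0 := Nat.cast_ne_zero.mpr (by omega)
    have hn3R : (3 : ℝ) ≤ (n : ℝ) := by exact_mod_cast hn3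
    have hn1R : (n : ℝ) - 1 ≠ 0 := by linarith
    have hC1 : ((n.choose (k-1)) : ℝ) ≠ 0 :=
      Nat.cast_ne_zero.mpr (Nat.choose_pos (by omega)).ne'
    have hC2 : ((n.choose k) : ℝ) ≠ 0 :=
      Nat.cast_ne_zero.mpr (Nat.choose_pos (by omega)).ne'
    have hdle : ∀ v w : X n, hammingDist v w ≤ n := fun v w =>
      le_trans hammingDist_le_card_fintype (le_of_eq (Fintype.card_fin n))
    have hkk : ((k - 1 : ℕ) : ℝ) = (k : ℝ) - 1 := by
      rw [Nat.cast_sub (by omega)]; norm_num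
    have hnk : ((n + 1 - k : ℕ) : ℝ) = (n : ℝ) + 1 - k := by
      rw [Nat.cast_sub (by omega)]; push_cast; ring
    have hlamR : (lam : ℝ) = (k : ℝ) * ((k : ℝ) - 1) / (n : ℝ) := by
      have hc := congrArg (Nat.cast : ℕ → ℝ) hlamn
      push_cast [Nat.cast_sub (show 1 ≤ k by omega)] at hc
      field_simp
      linarith
    set m := (supp u).card with hm
    set U' := (supp u).image Fin.succ with hU'
    have hU'card : U'.card = m := Finset.card_image_of_injective _ (Fin.succ_injective n)
    have h0U' : (0 : Fin (n+1)) ∉ U' := zero_not_mem_image_succ _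
    have hcF : ∀ b ∈ B, (supp u ∩ supp (F b)).card = (U' ∩ b).card := by
      intro b hb
      rw [hF]
      simp only
      rw [inter_supp_blockVec, ← hU', inter_erase_zero _ _ h0U']
    have hduF : ∀ b ∈ B, (hammingDist u (F b) : ℝ)
        = m + (if (0 : Fin (n+1)) ∈ b then (k : ℝ) - 1 else (k : ℝ))
          - 2 * ((U' ∩ b).card : ℝ) := by
      intro b hb
      have h := hd_add u (F b)
      rw [hcF b hb] at h
      have hsFb : (supp (F b)).card = if (0 : Fin (n+1)) ∈ b then k - 1 else k := by
        rw [← hammingDist_u0]; exact hdistF b hb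
      rw [hsFb] at h
      by_cases h0 : (0 : Fin (n+1)) ∈ b
      · rw [if_pos h0] at h ⊢
        have hc := congrArg (Nat.cast : ℕ → ℝ) h
        push_cast [Nat.cast_sub (show 1 ≤ k by omega)] at hc
        linarith
      · rw [if_neg h0] at h ⊢
        have hc := congrArg (Nat.cast : ℕ → ℝ) h
        push_cast at hc
        linarith
    have hBc : ∑ b ∈ B, (U' ∩ b).card = m * k := by
      rw [block_sum_c hdeg, hU'card]
    have hBc2 : ((∑ b ∈ B, (U' ∩ b).card ^ 2 : ℕ) : ℝ)
        = m * k + m * ((m : ℝ) - 1) * lam := by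
      rw [block_sum_c2 hdeg hpair, hU'card]
      push_cast
      rw [cast_mul_pred]
    have hBc0 : ∑ b ∈ B.filter (fun b => (0 : Fin (n+1)) ∈ b), (U' ∩ b).card = m * lam := by
      rw [block_sum_c0 hpair U' h0U', hU'card]
    have hBcnot : ((∑ b ∈ B.filter (fun b => ¬ (0 : Fin (n+1)) ∈ b), (U' ∩ b).card : ℕ) : ℝ)
        = m * k - m * lam := by
      have h := Finset.sum_filter_add_sum_filter_not B (fun b => (0 : Fin (n+1)) ∈ b)
        (fun b => (U' ∩ b).card)
      rw [hBc0, hBc] at h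
      have hc := congrArg (Nat.cast : ℕ → ℝ) h
      push_cast at hc ⊢
      linarith
    have hscast : ∀ r : ℕ, 1 ≤ r →
        ((∑ x ∈ shell n r, (supp u ∩ supp x).card : ℕ) : ℝ)
          = m * r * (n.choose r) / n := by
      intro r hr
      have h := shell_sum_c n r u hr (by omega)
      have hc := congrArg (Nat.cast : ℕ → ℝ) h
      push_cast at hc ⊢
      rw [← hm] at hc
      field_simp
      linarith
    have hscast2 : ∀ r : ℕ, 1 ≤ r →
        ((∑ x ∈ shell n r, (supp u ∩ supp x).card ^ 2 : ℕ) : ℝ)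
          = (m * ((n : ℝ) - 1) * r + m * ((m : ℝ) - 1) * (r * ((r : ℝ) - 1)))
              * (n.choose r) / ((n : ℝ) * ((n : ℝ) - 1)) := by
      intro r hr
      have h := shell_sum_c2 n r u hr (by omega)
      have hc := congrArg (Nat.cast : ℕ → ℝ) h
      push_cast [Nat.cast_sub hr, Nat.cast_sub (show 1 ≤ n by omega)] at hc
      rw [cast_mul_pred] at hc
      push_cast
      rw [← hm] at hc
      field_simp
      linarith
    have hQ1shell : ∀ r : ℕ, 1 ≤ r →
        ∑ x ∈ shell n r, Q n 1 (hammingDist u x)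
          = (n.choose r : ℝ) * (((n : ℝ) - 2*m - 2*r) + 4*m*r/(n : ℝ)) := by
      intro r hr
      have hstep : ∀ x ∈ shell n r, Q n 1 (hammingDist u x)
          = ((n : ℝ) - 2*m - 2*r) + 4 * ((supp u ∩ supp x).card : ℝ) := by
        intro x hx
        have hxc : (supp x).card = r := by
          simp only [shell, mem_filter, mem_univ, true_and] at hx
          rw [← hammingDist_u0]; exact hx
        have hd := hd_add u x
        rw [hxc] at hd
        rw [Q_one_eval n _ (hdle u x)]
        have hc := congrArg (Nat.cast : ℕ → ℝ) hd
        push_cast at hc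
        linarith
      rw [Finset.sum_congr rfl hstep, sum_affine, shell_card, hscast r hr]
      field_simp
    have hQ2shell : ∀ r : ℕ, 1 ≤ r →
        ∑ x ∈ shell n r, Q n 2 (hammingDist u x)
          = (n.choose r : ℝ) * ( ((((n : ℝ) - 2*m - 2*r))^2 - n)/2
            + 4*((n : ℝ) - 2*m - 2*r)*m*r/(n : ℝ)
            + 8*(m*((n : ℝ)-1)*r + m*((m : ℝ)-1)*(r*((r : ℝ)-1)))/((n : ℝ)*((n : ℝ)-1)) ) := by
      intro r hr
      have hstep : ∀ x ∈ shell n r, Q n 2 (hammingDist u x)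
          = (-(n : ℝ)/2) + (1/2) * (((n : ℝ) - 2*m - 2*r) + 4*((supp u ∩ supp x).card : ℝ))^2 := by
        intro x hx
        have hxc : (supp x).card = r := by
          simp only [shell, mem_filter, mem_univ, true_and] at hx
          rw [← hammingDist_u0]; exact hx
        have hd := hd_add u x
        rw [hxc] at hd
        rw [Q_two_eval n _ (hdle u x)]
        have hc := congrArg (Nat.cast : ℕ → ℝ) hd
        push_cast at hc
        have hdr : (hammingDist u x : ℝ) = m + r - 2*((supp u ∩ supp x).card : ℝ) := by linarith
        rw [hdr]
        ring
      rw [Finset.sum_congr rfl hstep, Finset.sum_add_distrib, Finset.sum_const, ← Finset.mul_sum,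
        sum_affine_sq, shell_card, hscast r hr, hscast2 r hr]
      field_simp
      ring
    have hQY : ∀ jj : ℕ, ∑ y ∈ Y, (1 : ℝ) * Q n jj (hammingDist u y)
        = ∑ b ∈ B, Q n jj (hammingDist u (F b)) := by
      intro jj
      simp only [one_mul]
      rw [hYim, Finset.sum_image hinj]
    have hR1 : ∑ b ∈ B, Q n 1 (hammingDist u (F b))
        = ((n : ℝ)+1)*((n : ℝ)-2*m-2*k) + 2*k + 4*(m*k) := by
      rw [← Finset.sum_filter_add_sum_filter_not B (fun b => (0 : Fin (n+1)) ∈ b)]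
      have h1 : ∀ b ∈ B.filter (fun b => (0 : Fin (n+1)) ∈ b), Q n 1 (hammingDist u (F b))
          = ((n : ℝ) - 2*m - 2*k + 2) + 4 * ((U' ∩ b).card : ℝ) := by
        intro b hb
        rw [Q_one_eval n _ (hdle u _), hduF b (Finset.mem_of_mem_filter b hb),
          if_pos (Finset.mem_filter.mp hb).2]
        ring
      have h2 : ∀ b ∈ B.filter (fun b => ¬ (0 : Fin (n+1)) ∈ b), Q n 1 (hammingDist u (F b))
          = ((n : ℝ) - 2*m - 2*k) + 4 * ((U' ∩ b).card : ℝ) := by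
        intro b hb
        rw [Q_one_eval n _ (hdle u _), hduF b (Finset.mem_of_mem_filter b hb),
          if_neg (Finset.mem_filter.mp hb).2]
        ring
      rw [Finset.sum_congr rfl h1, Finset.sum_congr rfl h2, sum_affine, sum_affine,
        hdeg 0, hcard_not, hBc0, hBcnot, hnk]
      push_cast
      ring
    have hR2 : ∑ b ∈ B, Q n 2 (hammingDist u (F b))
        = ((n : ℝ)+1)*(-(n : ℝ)/2)
          + (1/2)*( ((n : ℝ)+1)*((n : ℝ)-2*m-2*k)^2 + 8*((n : ℝ)-2*m-2*k)*(m*k)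
            + 16*((m*k : ℝ) + m*((m : ℝ)-1)*lam) )
          + (2*((n : ℝ)-2*m-2*k) + 2)*k + 8*(m*lam) := by
      have hsplit : ∀ b ∈ B, Q n 2 (hammingDist u (F b))
          = ((-(n : ℝ)/2) + (1/2) * (((n : ℝ)-2*m-2*k) + 4*((U' ∩ b).card : ℝ))^2)
            + (if (0 : Fin (n+1)) ∈ b then
                ((2*((n : ℝ)-2*m-2*k) + 2) + 8*((U' ∩ b).card : ℝ)) else 0) := by
        intro b hb
        rw [Q_two_eval n _ (hdle u _), hduF b hb]
        by_cases h0 : (0 : Fin (n+1)) ∈ b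
        · rw [if_pos h0, if_pos h0]; ring
        · rw [if_neg h0, if_neg h0]; ring
      rw [Finset.sum_congr rfl hsplit, Finset.sum_add_distrib]
      have hpart1 : ∑ b ∈ B, ((-(n : ℝ)/2) + (1/2) * (((n : ℝ)-2*m-2*k) + 4*((U' ∩ b).card : ℝ))^2)
          = ((n : ℝ)+1)*(-(n : ℝ)/2)
            + (1/2)*( ((n : ℝ)+1)*((n : ℝ)-2*m-2*k)^2 + 8*((n : ℝ)-2*m-2*k)*(m*k)
              + 16*((m*k : ℝ) + m*((m : ℝ)-1)*lam) ) := by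
        rw [Finset.sum_add_distrib, Finset.sum_const, ← Finset.mul_sum, sum_affine_sq,
          hBcard, hBc, hBc2]
        push_cast
        ring
      have hpart2 : ∑ b ∈ B, (if (0 : Fin (n+1)) ∈ b then
            ((2*((n : ℝ)-2*m-2*k) + 2) + 8*((U' ∩ b).card : ℝ)) else 0)
          = (2*((n : ℝ)-2*m-2*k) + 2)*k + 8*(m*lam) := by
        rw [← Finset.sum_filter, sum_affine, hdeg 0, hBc0]
        push_cast
        ring
      rw [hpart1, hpart2]
      ring
    have hWt1 : Wt n Y (fun _ => 1) (k-1) = (k : ℝ) := by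
      simp [Wt, hfilt1card]
    have hWt2 : Wt n Y (fun _ => 1) k = ((n + 1 - k : ℕ) : ℝ) := by
      simp [Wt, hfilt2card]
    have hknotmem : (k - 1 : ℕ) ∉ ({k} : Finset ℕ) := by simp; omega
    have hdivmul : ∀ (W C E : ℝ), C ≠ 0 → W / C * (C * E) = W * E := by
      intro W C E hC
      rw [mul_comm C E, div_mul_eq_mul_div, ← mul_assoc, mul_div_assoc, div_self hC, mul_one]
    interval_cases j
    · -- j = 0
      have hQ0shell : ∀ r : ℕ, ∑ x ∈ shell n r, Q n 0 (hammingDist u x) = (n.choose r : ℝ) := by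
        intro r
        rw [Finset.sum_congr rfl (fun x _ => Q_zero_eval n _), Finset.sum_const, shell_card,
          nsmul_eq_mul, mul_one]
      rw [Finset.sum_insert hknotmem, Finset.sum_singleton, hQ0shell, hQ0shell, hWt1, hWt2,
        div_mul_cancel₀ _ hC1, div_mul_cancel₀ _ hC2]
      have hRHS : ∑ y ∈ Y, (1 : ℝ) * Q n 0 (hammingDist u y) = ((n : ℝ) + 1) := by
        rw [Finset.sum_congr rfl (fun y _ => by rw [Q_zero_eval, one_mul]), Finset.sum_const,
          hYcard, nsmul_eq_mul, mul_one]
        push_cast; ring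
      rw [hRHS, hnk]
      ring
    · -- j = 1
      rw [Finset.sum_insert hknotmem, Finset.sum_singleton, hWt1, hWt2,
        hQ1shell (k-1) (by omega), hQ1shell k (by omega), hQY 1, hR1,
        hdivmul _ _ _ hC1, hdivmul _ _ _ hC2, hkk, hnk]
      field_simp
      ring
    · -- j = 2
      rw [Finset.sum_insert hknotmem, Finset.sum_singleton, hWt1, hWt2,
        hQ2shell (k-1) (by omega), hQ2shell k (by omega), hQY 2, hR2,
        hdivmul _ _ _ hC1, hdivmul _ _ _ hC2, hkk, hnk, hlamR]
      field_simp
      ring
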